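/- arXiv:1802.00067 — 4 statements merged into one kernel-verified Lean document; each statement's English description precedes it below -/
import Mathlib

section
/- Let X ∈ M_n(ℂ) ⊗ M_d(ℂ) be a positive semidefinite matrix and let X₂ = (Tr_n ⊗ id_d)(X) be its partial trace over the first tensor factor. If (n+1)·X − I_n ⊗ X₂ is positive semidefinite, then X ∈ SEP_{n,d}. -/
open MeasureTheory Filter Topology Polynomial Matrix Kronecker
open scoped ComplexOrder

noncomputable section

/-- Measurable space structure on matrices (entrywise). -/
instance matMS (m n : Type*) : MeasurableSpace (Matrix m n ℂ) :=
  inferInstanceAs (MeasurableSpace (m → n → ℂ))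

/-- The ℓ²→ℓ² operator norm of a complex square matrix. -/
def opNorm {N : Type*} [Fintype N] [DecidableEq N] (X : Matrix N N ℂ) : ℝ :=
  ‖Matrix.toEuclideanCLM (𝕜 := ℂ) (n := N) X‖

/-- Application of a real polynomial to a complex square matrix. -/
def polyApply {N : Type*} [Fintype N] [DecidableEq N] (P : Polynomial ℝ)
    (X : Matrix N N ℂ) : Matrix N N ℂ :=
  Polynomial.aeval X (P.map (algebraMap ℝ ℂ))

/-- The (topological) support of a measure on ℝ: points all of whose open
neighbourhoods have positive measure. -/
def msupport (μ : Measure ℝ) : Set ℝ :=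
  {x | ∀ U : Set ℝ, IsOpen U → x ∈ U → 0 < μ U}

/-- Strong convergence of a sequence of random matrices `X d ∈ M_n(ℂ) ⊗ M_d(ℂ)`
towards a compactly supported probability measure `μ`: almost surely, for every
real polynomial `P`, the normalized traces of `P(X d)` converge to `∫ P dμ` and the
operator norms of `P(X d)` converge to `sup {|P(x)| : x ∈ supp μ}`. -/
def StrongConv {Ω : Type*} [MeasurableSpace Ω] (ℙ : Measure Ω) (n : ℕ)
    (X : (d : ℕ) → Ω → Matrix (Fin n × Fin d) (Fin n × Fin d) ℂ)
    (μ : Measure ℝ) : Prop :=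
  ∀ᵐ ω ∂ℙ, ∀ P : Polynomial ℝ,
    Tendsto (fun d : ℕ => ((n : ℂ) * (d : ℂ))⁻¹ * (polyApply P (X d ω)).trace) atTop
      (𝓝 ((∫ x, P.eval x ∂μ : ℝ) : ℂ)) ∧
    Tendsto (fun d : ℕ => opNorm (polyApply P (X d ω))) atTop
      (𝓝 (sSup ((fun x => |P.eval x|) '' msupport μ)))

/-- Unitary invariance of a sequence of random matrices: for every `d` and every
unitary `U`, the random matrix `U (X d) U*` has the same distribution as `X d`. -/
def UnitInv {Ω : Type*} [MeasurableSpace Ω] (ℙ : Measure Ω) (n : ℕ)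
    (X : (d : ℕ) → Ω → Matrix (Fin n × Fin d) (Fin n × Fin d) ℂ) : Prop :=
  ∀ d : ℕ, ∀ U : Matrix (Fin n × Fin d) (Fin n × Fin d) ℂ,
    U ∈ unitary (Matrix (Fin n × Fin d) (Fin n × Fin d) ℂ) →
    Measure.map (fun ω => U * X d ω * star U) ℙ = Measure.map (X d) ℙ

/-- The separable cone `SEP_{n,d}`. -/
def SEP (n d : ℕ) : Set (Matrix (Fin n × Fin d) (Fin n × Fin d) ℂ) :=
  {X | ∃ (k : ℕ) (A : Fin k → Matrix (Fin n) (Fin n) ℂ)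
      (B : Fin k → Matrix (Fin d) (Fin d) ℂ),
    (∀ i, (A i).PosSemidef) ∧ (∀ i, (B i).PosSemidef) ∧ X = ∑ i, A i ⊗ₖ B i}

/-- The partial transpose on `M_n(ℂ) ⊗ M_d(ℂ)`: transposition of the first factor. -/
def ptrans {n d : ℕ} (X : Matrix (Fin n × Fin d) (Fin n × Fin d) ℂ) :
    Matrix (Fin n × Fin d) (Fin n × Fin d) ℂ :=
  fun p q => X (q.1, p.2) (p.1, q.2)

/-- The PPT cone `PPT_{n,d}`: positive semidefinite matrices with positive
semidefinite partial transpose. -/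
def PPT (n d : ℕ) : Set (Matrix (Fin n × Fin d) (Fin n × Fin d) ℂ) :=
  {X | X.PosSemidef ∧ (ptrans X).PosSemidef}

/-- Partial trace over the first tensor factor: `(Tr_n ⊗ id_d)(X) = Σ_i X_{ii}`. -/
def ptrace {n d : ℕ} (X : Matrix (Fin n × Fin d) (Fin n × Fin d) ℂ) :
    Matrix (Fin d) (Fin d) ℂ :=
  fun a b => ∑ i : Fin n, X (i, a) (i, b)


/-! ### Auxiliary machinery for the proof of `stmt4` -/

/-- The fourth root of unity attached to an element of `ZMod 4`. -/
def ph (t : ZMod 4) : ℂ := Complex.I ^ t.val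

lemma ph_add (s t : ZMod 4) : ph (s + t) = ph s * ph t := by
  unfold ph
  rw [← pow_add, pow_eq_pow_mod (s.val + t.val) Complex.I_pow_four, ZMod.val_add]

lemma ph_zero : ph 0 = 1 := by unfold ph; rw [ZMod.val_zero, pow_zero]

lemma ph_conj (t : ZMod 4) : (starRingEnd ℂ) (ph t) = ph (-t) := by
  have h1 : ph t * ph (-t) = 1 := by rw [← ph_add]; simp [ph_zero]
  have h2 : (starRingEnd ℂ) (ph t) * ph t = 1 := by
    rw [mul_comm, Complex.mul_conj]
    simp [ph, map_pow, Complex.normSq_I]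
  calc (starRingEnd ℂ) (ph t) = (starRingEnd ℂ) (ph t) * (ph t * ph (-t)) := by
        rw [h1, mul_one]
    _ = ((starRingEnd ℂ) (ph t) * ph t) * ph (-t) := by ring
    _ = ph (-t) := by rw [h2, one_mul]

lemma ph_ne_one {t : ZMod 4} (ht : t ≠ 0) : ph t ≠ 1 := by
  fin_cases t
  · exact absurd rfl ht
  · simp [ph, ZMod.val, Complex.ext_iff]
  · norm_num [ph, ZMod.val, Complex.ext_iff]
  · norm_num [ph, ZMod.val, Complex.ext_iff, pow_succ, Complex.I_sq]

/-- The key character sum over fourth-root-of-unity phase vectors. -/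
lemma keySum {n : ℕ} (i j k l : Fin n) :
    ∑ θ : Fin n → ZMod 4,
      ph (θ i) * (starRingEnd ℂ) (ph (θ j)) * ((starRingEnd ℂ) (ph (θ k)) * ph (θ l))
    = if (i = j ∧ k = l) ∨ (k = i ∧ l = j) then (4:ℂ)^n else 0 := by
  classical
  set L : (Fin n → ZMod 4) → ZMod 4 := fun θ => θ i + -θ j + (-θ k + θ l) with hL
  have hsummand : ∀ θ : Fin n → ZMod 4,
      ph (θ i) * (starRingEnd ℂ) (ph (θ j)) * ((starRingEnd ℂ) (ph (θ k)) * ph (θ l))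
      = ph (L θ) := by
    intro θ
    rw [ph_conj, ph_conj, hL]
    simp only [ph_add]
  simp only [hsummand]
  by_cases hcond : (i = j ∧ k = l) ∨ (k = i ∧ l = j)
  · rw [if_pos hcond]
    have hz : ∀ θ : Fin n → ZMod 4, L θ = 0 := by
      rcases hcond with ⟨hij, hkl⟩ | ⟨hki, hlj⟩ <;> intro θ
      · subst hij; subst hkl; simp [hL]
      · simp only [hL]; rw [hki, hlj]; ring
    simp only [hz, ph_zero]
    simp [Finset.card_univ]
  · rw [if_neg hcond]
    push_neg at hcond
    obtain ⟨h1, h2⟩ := hcond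
    have hθ0 : ∃ θ₀ : Fin n → ZMod 4, L θ₀ ≠ 0 := by
      by_cases hij : i = j
      · have hkl : k ≠ l := h1 hij
        refine ⟨Pi.single l 1, ?_⟩
        subst hij
        have e1 : (if k = l then (1:ZMod 4) else 0) = 0 := by rw [if_neg hkl]
        simp only [hL, Pi.single_apply, if_true, e1]
        simp
        decide
      · by_cases hki : k = i
        · have hlj : l ≠ j := h2 hki
          refine ⟨Pi.single l 1, ?_⟩
          subst hki
          have e1 : (if j = l then (1:ZMod 4) else 0) = 0 := by
            rw [if_neg (fun h => hlj h.symm)]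
          simp only [hL, Pi.single_apply, if_true, e1]
          simp
          decide
        · refine ⟨Pi.single i 1, ?_⟩
          have hji : (if j = i then (1:ZMod 4) else 0) = 0 := by
            rw [if_neg (fun h => hij h.symm)]
          have hki' : (if k = i then (1:ZMod 4) else 0) = 0 := by rw [if_neg hki]
          simp only [hL, Pi.single_apply, if_true, hji, hki']
          by_cases hli : l = i <;> simp [hli] <;> decide
    obtain ⟨θ₀, hθ0⟩ := hθ0
    have hadd : ∀ θ, L (θ₀ + θ) = L θ₀ + L θ := by
      intro θ; simp only [hL, Pi.add_apply]; ring
    have hshift : ph (L θ₀) * ∑ θ : Fin n → ZMod 4, ph (L θ)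
        = ∑ θ : Fin n → ZMod 4, ph (L θ) := by
      rw [Finset.mul_sum]
      exact Fintype.sum_equiv (Equiv.addLeft θ₀) (fun θ => ph (L θ₀) * ph (L θ))
        (fun θ => ph (L θ))
        (fun θ => by simp only [Equiv.coe_addLeft]; rw [hadd, ph_add (L θ₀) (L θ)])
    have hzero : (ph (L θ₀) - 1) * ∑ θ : Fin n → ZMod 4, ph (L θ) = 0 := by
      rw [sub_mul, one_mul, hshift, sub_self]
    rcases mul_eq_zero.mp hzero with hc | hs
    · exact absurd (sub_eq_zero.mp hc) (ph_ne_one hθ0)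
    · exact hs

lemma mem_SEP_of_sum {n d : ℕ} {ι : Type} [Fintype ι]
    {X : Matrix (Fin n × Fin d) (Fin n × Fin d) ℂ}
    (A : ι → Matrix (Fin n) (Fin n) ℂ) (B : ι → Matrix (Fin d) (Fin d) ℂ)
    (hA : ∀ i, (A i).PosSemidef) (hB : ∀ i, (B i).PosSemidef)
    (hX : X = ∑ i, A i ⊗ₖ B i) : X ∈ SEP n d := by
  refine ⟨Fintype.card ι, A ∘ (Fintype.equivFin ι).symm, B ∘ (Fintype.equivFin ι).symm,
    fun i => hA _, fun i => hB _, ?_⟩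
  rw [hX]
  exact (Equiv.sum_comp (Fintype.equivFin ι).symm (fun i => A i ⊗ₖ B i)).symm

/-- Column matrix of a vector. -/
def vecMat {n : ℕ} (g : Fin n → ℂ) : Matrix (Fin n) (Fin 1) ℂ := fun i _ => g i

lemma vecMat_outer_apply {n : ℕ} (g : Fin n → ℂ) (i j : Fin n) :
    (vecMat g * (vecMat g)ᴴ) i j = g i * (starRingEnd ℂ) (g j) := by
  simp [vecMat, Matrix.mul_apply, Matrix.conjTranspose_apply]

/-- The matrix `p ↦ g p.1 · δ_{p.2, c}`. -/
def colMat (n d : ℕ) (g : Fin n → ℂ) : Matrix (Fin n × Fin d) (Fin d) ℂ :=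
  fun p c => if p.2 = c then g p.1 else 0

lemma colMat_sandwich {n d : ℕ} (Y : Matrix (Fin n × Fin d) (Fin n × Fin d) ℂ)
    (g : Fin n → ℂ) (a b : Fin d) :
    ((colMat n d g)ᴴ * Y * colMat n d g) a b
      = ∑ k : Fin n, ∑ l : Fin n, (starRingEnd ℂ) (g k) * g l * Y (k, a) (l, b) := by
  rw [Matrix.mul_assoc]
  simp only [Matrix.mul_apply, Matrix.conjTranspose_apply, colMat, Fintype.sum_prod_type]
  simp [apply_ite, mul_ite, ite_mul, mul_zero, zero_mul, Finset.mul_sum, mul_comm, mul_assoc,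
    mul_left_comm]

/-- if `(n+1)X − I_n ⊗ X₂ ≥ 0` then `X` is separable. -/
theorem stmt4 (n d : ℕ) (hn : 0 < n) (hd : 0 < d)
    (X : Matrix (Fin n × Fin d) (Fin n × Fin d) ℂ) (hX : X.PosSemidef)
    (h : (((n : ℂ) + 1) • X - (1 : Matrix (Fin n) (Fin n) ℂ) ⊗ₖ ptrace X).PosSemidef) :
    X ∈ SEP n d := by
  classical
  set Y : Matrix (Fin n × Fin d) (Fin n × Fin d) ℂ :=
    ((n : ℂ) + 1) • X - (1 : Matrix (Fin n) (Fin n) ℂ) ⊗ₖ ptrace X with hYdef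
  have hn1 : ((n : ℂ) + 1) ≠ 0 := by
    intro hc
    have := congrArg Complex.re hc
    simp at this
    have : (0:ℝ) < (n:ℝ) + 1 := by positivity
    linarith [this]
  have h4n : ((4 : ℂ)^n) ≠ 0 := by positivity
  -- scalars
  set r : ℝ := (Real.sqrt (((n:ℝ)+1) * 4^n))⁻¹ with hrdef
  set s : ℝ := (Real.sqrt ((n:ℝ)+1))⁻¹ with hsdef
  have hr2 : (r : ℂ) * (r : ℂ) = (((n:ℂ) + 1) * 4^n)⁻¹ := by
    have hx : (0:ℝ) ≤ ((n:ℝ)+1) * 4^n := by positivity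
    have : r * r = (((n:ℝ)+1) * 4^n)⁻¹ := by
      rw [hrdef, ← mul_inv, Real.mul_self_sqrt hx]
    rw [← Complex.ofReal_mul, this]
    push_cast
    ring
  have hs2 : (s : ℂ) * (s : ℂ) = ((n:ℂ) + 1)⁻¹ := by
    have hx : (0:ℝ) ≤ (n:ℝ)+1 := by positivity
    have : s * s = ((n:ℝ)+1)⁻¹ := by
      rw [hsdef, ← mul_inv, Real.mul_self_sqrt hx]
    rw [← Complex.ofReal_mul, this]
    push_cast
    ring
  -- families
  set A : ((Fin n → ZMod 4) ⊕ Fin n) → Matrix (Fin n) (Fin n) ℂ :=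
    Sum.elim
      (fun θ => vecMat (fun i => (r:ℂ) * ph (θ i)) * (vecMat (fun i => (r:ℂ) * ph (θ i)))ᴴ)
      (fun k => vecMat (fun i => if i = k then (s:ℂ) else 0) *
        (vecMat (fun i => if i = k then (s:ℂ) else 0))ᴴ) with hA
  set B : ((Fin n → ZMod 4) ⊕ Fin n) → Matrix (Fin d) (Fin d) ℂ :=
    Sum.elim
      (fun θ => (colMat n d (fun i => ph (θ i)))ᴴ * Y * colMat n d (fun i => ph (θ i)))
      (fun k => (colMat n d (fun i => if i = k then (1:ℂ) else 0))ᴴ * Y *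
        colMat n d (fun i => if i = k then (1:ℂ) else 0)) with hB
  apply mem_SEP_of_sum A B
  · rintro (θ | k) <;> exact Matrix.posSemidef_self_mul_conjTranspose _
  · rintro (θ | k) <;> exact h.conjTranspose_mul_mul_same _
  · -- the main identity
    rw [Fintype.sum_sum_type]
    ext ⟨i, a⟩ ⟨j, b⟩
    simp only [Matrix.add_apply, Matrix.sum_apply, Matrix.kroneckerMap_apply, hA, hB,
      Sum.elim_inl, Sum.elim_inr, vecMat_outer_apply, colMat_sandwich]
    -- entry facts about Y
    have hYent : ∀ (k : Fin n) (a b : Fin d),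
        Y (k, a) (k, b) = ((n:ℂ) + 1) * X (k, a) (k, b) - ptrace X a b := by
      intro k a b
      rw [hYdef]
      simp [Matrix.sub_apply, Matrix.smul_apply, Matrix.one_apply, smul_eq_mul]
    -- normalize the θ-summands
    have e1 : ∀ θ : Fin n → ZMod 4,
        (↑r * ph (θ i) * (starRingEnd ℂ) (↑r * ph (θ j)) *
          ∑ k : Fin n, ∑ l : Fin n, (starRingEnd ℂ) (ph (θ k)) * ph (θ l) * Y (k, a) (l, b))
        = ∑ k : Fin n, ∑ l : Fin n,
            (↑r * ↑r) * ((ph (θ i) * (starRingEnd ℂ) (ph (θ j)) *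
              ((starRingEnd ℂ) (ph (θ k)) * ph (θ l))) * Y (k, a) (l, b)) := by
      intro θ
      rw [_root_.map_mul, Complex.conj_ofReal, Finset.mul_sum]
      refine Finset.sum_congr rfl fun k _ => ?_
      rw [Finset.mul_sum]
      refine Finset.sum_congr rfl fun l _ => ?_
      ring
    simp only [e1]
    have e2 : (∑ θ : Fin n → ZMod 4, ∑ k : Fin n, ∑ l : Fin n,
        (↑r * ↑r) * ((ph (θ i) * (starRingEnd ℂ) (ph (θ j)) *
          ((starRingEnd ℂ) (ph (θ k)) * ph (θ l))) * Y (k, a) (l, b)))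
      = ∑ k : Fin n, ∑ l : Fin n, (↑r * ↑r) *
          ((if (i = j ∧ k = l) ∨ (k = i ∧ l = j) then (4:ℂ)^n else 0) * Y (k, a) (l, b)) := by
      rw [Finset.sum_comm]
      refine Finset.sum_congr rfl fun k _ => ?_
      rw [Finset.sum_comm]
      refine Finset.sum_congr rfl fun l _ => ?_
      rw [← Finset.mul_sum, ← Finset.sum_mul, keySum]
    rw [e2]
    -- collapse the k-column sums
    have e3 : ∀ k : Fin n, (∑ k' : Fin n, ∑ l' : Fin n,
        (starRingEnd ℂ) (if k' = k then (1:ℂ) else 0) * (if l' = k then (1:ℂ) else 0) *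
          Y (k', a) (l', b)) = Y (k, a) (k, b) := by
      intro k
      simp [apply_ite, ite_mul, zero_mul, mul_ite, mul_zero]
    simp only [e3]
    by_cases hij : i = j
    · subst hij
      have hcond : ∀ k l : Fin n, ((True ∧ k = l) ∨ (k = i ∧ l = i)) = (k = l) := by
        intro k l
        apply propext
        constructor
        · rintro (⟨-, hkl⟩ | ⟨h1, h2⟩)
          · exact hkl
          · rw [h1, h2]
        · intro hkl
          exact Or.inl ⟨trivial, hkl⟩
      simp only [hcond]
      have e5 : ∀ k : Fin n,
          (∑ l : Fin n, (↑r * ↑r) * ((if k = l then (4:ℂ)^n else 0) * Y (k, a) (l, b)))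
          = (↑r * ↑r) * ((4:ℂ)^n * Y (k, a) (k, b)) := by
        intro k
        rw [Finset.sum_eq_single k]
        · rw [if_pos rfl]
        · intro l _ hl
          rw [if_neg (fun hh : k = l => hl hh.symm)]
          simp
        · intro hc
          exact absurd (Finset.mem_univ k) hc
      simp only [e5]
      have e6 : (∑ k : Fin n, (if i = k then (s:ℂ) else 0) *
          (starRingEnd ℂ) (if i = k then (s:ℂ) else 0) * Y (k, a) (k, b))
          = (↑s * ↑s) * Y (i, a) (i, b) := by
        rw [Finset.sum_eq_single i]
        · simp [Complex.conj_ofReal, mul_assoc]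
        · intro k _ hk
          rw [if_neg (fun hh : i = k => hk hh.symm)]
          simp
        · intro hcontra
          exact absurd (Finset.mem_univ i) hcontra
      rw [e6, ← Finset.mul_sum]
      have e7 : (∑ k : Fin n, (4:ℂ)^n * Y (k, a) (k, b)) = (4:ℂ)^n * ptrace X a b := by
        rw [← Finset.mul_sum]
        congr 1
        simp only [hYent]
        rw [Finset.sum_sub_distrib, ← Finset.mul_sum, Finset.sum_const, Finset.card_univ,
          Fintype.card_fin, nsmul_eq_mul]
        have hpt : (∑ k : Fin n, X (k, a) (k, b)) = ptrace X a b := rfl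
        rw [hpt]
        ring
      rw [e7, hr2, hs2, hYent]
      field_simp
      ring
    · have hcond : ∀ k l : Fin n, ((i = j ∧ k = l) ∨ (k = i ∧ l = j)) = (k = i ∧ l = j) := by
        intro k l
        apply propext
        constructor
        · rintro (⟨hc, -⟩ | hc)
          · exact absurd hc hij
          · exact hc
        · exact Or.inr
      simp only [hcond]
      have e8 : (∑ k : Fin n, ∑ l : Fin n, (↑r * ↑r) *
          ((if k = i ∧ l = j then (4:ℂ)^n else 0) * Y (k, a) (l, b)))
          = (↑r * ↑r) * ((4:ℂ)^n * Y (i, a) (j, b)) := by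
        rw [Finset.sum_eq_single i]
        · rw [Finset.sum_eq_single j]
          · simp
          · intro l _ hl
            simp [hl]
          · intro hcontra
            exact absurd (Finset.mem_univ j) hcontra
        · intro k _ hk
          simp [hk]
        · intro hcontra
          exact absurd (Finset.mem_univ i) hcontra
      rw [e8]
      have e9 : ∀ k : Fin n, (if i = k then (s:ℂ) else 0) *
          (starRingEnd ℂ) (if j = k then (s:ℂ) else 0) * Y (k, a) (k, b) = 0 := by
        intro k
        by_cases hik : i = k
        · rw [if_neg (fun hjk : j = k => hij (hik.trans hjk.symm))]
          simp
        · rw [if_neg hik]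
          simp
      simp only [e9, Finset.sum_const_zero, add_zero]
      have hYoff : Y (i, a) (j, b) = ((n:ℂ) + 1) * X (i, a) (j, b) := by
        rw [hYdef]
        simp [Matrix.one_apply, hij, smul_eq_mul]
      rw [hYoff, hr2]
      field_simp
end
end

section
/- Let X ∈ M_n(ℂ) ⊗ M_d(ℂ) be a positive semidefinite matrix and let X₂ = (Tr_n ⊗ id_d)(X) be its partial trace over the first tensor factor. If n·(I_n ⊗ X₂) − (n²−1)·X is positive semidefinite, then X ∈ SEP_{n,d}. -/
open MeasureTheory Filter Topology Polynomial Matrix Kronecker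
open scoped ComplexOrder

noncomputable section

namespace Stmt5Aux

lemma SEP_zero (n d : ℕ) : (0 : Matrix (Fin n × Fin d) (Fin n × Fin d) ℂ) ∈ SEP n d :=
  ⟨0, fun i => i.elim0, fun i => i.elim0, fun i => i.elim0, fun i => i.elim0, by simp⟩

lemma SEP_add {n d : ℕ} {X Y : Matrix (Fin n × Fin d) (Fin n × Fin d) ℂ}
    (hX : X ∈ SEP n d) (hY : Y ∈ SEP n d) : X + Y ∈ SEP n d := by
  obtain ⟨k1, A1, B1, hA1, hB1, rfl⟩ := hX
  obtain ⟨k2, A2, B2, hA2, hB2, rfl⟩ := hY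
  refine ⟨k1 + k2, Fin.append A1 A2, Fin.append B1 B2, ?_, ?_, ?_⟩
  · intro i
    refine Fin.addCases (fun i => ?_) (fun i => ?_) i
    · simpa [Fin.append_left] using hA1 i
    · simpa [Fin.append_right] using hA2 i
  · intro i
    refine Fin.addCases (fun i => ?_) (fun i => ?_) i
    · simpa [Fin.append_left] using hB1 i
    · simpa [Fin.append_right] using hB2 i
  · rw [Fin.sum_univ_add]
    simp [Fin.append_left, Fin.append_right]

lemma SEP_sum {n d : ℕ} {ι : Type*} [Fintype ι]
    (f : ι → Matrix (Fin n × Fin d) (Fin n × Fin d) ℂ)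
    (hf : ∀ i, f i ∈ SEP n d) : (∑ i, f i) ∈ SEP n d :=
  Finset.sum_induction f (· ∈ SEP n d) (fun _ _ ha hb => SEP_add ha hb) (SEP_zero n d)
    (fun i _ => hf i)

lemma SEP_kron {n d : ℕ} {A : Matrix (Fin n) (Fin n) ℂ} {B : Matrix (Fin d) (Fin d) ℂ}
    (hA : A.PosSemidef) (hB : B.PosSemidef) : A ⊗ₖ B ∈ SEP n d :=
  ⟨1, fun _ => A, fun _ => B, fun _ => hA, fun _ => hB, by simp⟩

lemma posSemidef_smul_c {N : Type*} [Fintype N] {M : Matrix N N ℂ} (hM : M.PosSemidef)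
    {c : ℂ} (hc : 0 ≤ c) : (c • M).PosSemidef := by
  have him : c.im = 0 := ((Complex.le_def.mp hc).2).symm
  have hstar : star c = c := by
    rw [Complex.star_def, Complex.conj_eq_iff_im]; exact him
  refine Matrix.PosSemidef.of_dotProduct_mulVec_nonneg ?_ ?_
  · rw [Matrix.IsHermitian, Matrix.conjTranspose_smul, hstar, hM.1.eq]
  · intro x
    rw [Matrix.smul_mulVec, dotProduct_smul, smul_eq_mul]
    exact mul_nonneg hc (hM.dotProduct_mulVec_nonneg x)

lemma SEP_smul {n d : ℕ} {X : Matrix (Fin n × Fin d) (Fin n × Fin d) ℂ}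
    {c : ℂ} (hc : 0 ≤ c) (hX : X ∈ SEP n d) : c • X ∈ SEP n d := by
  obtain ⟨k, A, B, hA, hB, rfl⟩ := hX
  refine ⟨k, fun i => c • A i, B, fun i => posSemidef_smul_c (hA i) hc, hB, ?_⟩
  rw [Finset.smul_sum]
  exact Finset.sum_congr rfl fun i _ => (Matrix.smul_kronecker c (A i) (B i)).symm

lemma posSemidef_vecMulVec {N : Type*} [Fintype N] [DecidableEq N] (v : N → ℂ) :
    (Matrix.vecMulVec v (star v)).PosSemidef := by
  have h := Matrix.posSemidef_conjTranspose_mul_self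
    (Matrix.of fun (_ : Unit) (p : N) => star (v p))
  convert h using 2
  ext p q
  simp [Matrix.mul_apply, Matrix.vecMulVec_apply]

lemma ite_apply_mat {m' n' : Type*} (c : Prop) [Decidable c] (M : Matrix m' n' ℂ)
    (x : m') (y : n') : (if c then M else 0) x y = if c then M x y else 0 := by
  split_ifs <;> simp

lemma key3 (z : ℂ) (hz : z^2 + z + 1 = 0) (hcz : (starRingEnd ℂ) z = z^2)
    (a1 a2 b1 b2 c1 c2 d1 d2 : ℂ) :
    ∑ t : Fin 3, ((a1 + z^(t:ℕ) * a2) * (starRingEnd ℂ) (b1 + z^(t:ℕ) * b2)) *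
      ((z^(t:ℕ) * c1 - c2) * (starRingEnd ℂ) (z^(t:ℕ) * d1 - d2))
    = 3 * ((a1 * (starRingEnd ℂ) b1 + a2 * (starRingEnd ℂ) b2) *
          (c1 * (starRingEnd ℂ) d1 + c2 * (starRingEnd ℂ) d2)
        - a1 * (starRingEnd ℂ) b2 * c1 * (starRingEnd ℂ) d2
        - a2 * (starRingEnd ℂ) b1 * c2 * (starRingEnd ℂ) d1) := by
  rw [Fin.sum_univ_three]
  simp only [Fin.val_zero, Fin.val_one, pow_zero, pow_one, one_mul, map_add, _root_.map_mul,
    map_sub, map_pow, _root_.map_one, hcz, show ((2 : Fin 3) : ℕ) = 2 from rfl]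
  set B1 := (starRingEnd ℂ) b1
  set B2 := (starRingEnd ℂ) b2
  set D1 := (starRingEnd ℂ) d1
  set D2 := (starRingEnd ℂ) d2
  linear_combination ((-2)*a2*B2*c2*D2 + (-1)*a2*B2*c2*D1 + (-1)*a2*B2*c1*D2 + (-2)*a2*B2*c1*D1 + (1)*a2*B1*c2*D2 + (2)*a2*B1*c2*D1 + (-1)*a2*B1*c1*D2 + (1)*a2*B1*c1*D1 + (1)*a1*B2*c2*D2 + (-1)*a1*B2*c2*D1 + (2)*a1*B2*c1*D2 + (1)*a1*B2*c1*D1 + (-1)*a1*B1*c2*D1 + (-1)*a1*B1*c1*D2 + (-2)*a1*B1*c1*D1 + (2)*z*a2*B2*c2*D2 + (1)*z*a2*B2*c2*D1 + (1)*z*a2*B2*c1*D2 + (2)*z*a2*B2*c1*D1 + (-2)*z*a2*B1*c2*D1 + (1)*z*a2*B1*c1*D2 + (-1)*z*a2*B1*c1*D1 + (-1)*z*a1*B2*c2*D2 + (1)*z*a1*B2*c2*D1 + (-2)*z*a1*B2*c1*D2 + (-1)*z*a1*B2*c1*D1 + (1)*z*a1*B1*c2*D1 + (2)*z*a1*B1*c1*D1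 + (-1)*z^2*a2*B1*c1*D2 + (1)*z^2*a1*B2*c2*D2 + (-1)*z^2*a1*B1*c2*D1 + (-1)*z^3*a2*B2*c2*D2 + (-1)*z^3*a2*B2*c2*D1 + (-1)*z^3*a2*B2*c1*D2 + (-2)*z^3*a2*B2*c1*D1 + (1)*z^3*a2*B1*c2*D1 + (1)*z^3*a2*B1*c1*D1 + (-1)*z^3*a1*B2*c2*D1 + (1)*z^3*a1*B2*c1*D2 + (1)*z^3*a1*B2*c1*D1 + (-1)*z^3*a1*B1*c1*D1 + (1)*z^4*a2*B2*c2*D2 + (1)*z^4*a2*B2*c2*D1 + (2)*z^4*a2*B2*c1*D1 + (-1)*z^4*a2*B1*c2*D1 + (-1)*z^4*a1*B2*c1*D2 + (-1)*z^4*a1*B2*c1*D1 + (1)*z^4*a1*B1*c1*D1 + (-1)*z^5*a2*B2*c2*D1 + (1)*z^5*a2*B2*c1*D2 + (-1)*z^5*a2*B1*c1*D1 + (1)*z^5*a1*B2*c2*D1 + (1)*z^5*a1*B2*c1*D1 + (-1)*z^6*a2*B2*c1*D2 + (-1)*z^6*a2*B2*c1*D1 + (1)*z^6*a2*B1*c1*D1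 + (-1)*z^6*a1*B2*c2*D1 + (1)*z^7*a2*B2*c2*D1 + (1)*z^7*a2*B2*c1*D1 + (-1)*z^7*a1*B2*c1*D1 + (-1)*z^8*a2*B2*c2*D1 + (1)*z^8*a1*B2*c1*D1 + (-1)*z^9*a2*B2*c1*D1 + (1)*z^10*a2*B2*c1*D1) * hz

lemma sum_ite_const {α : Type*} [Fintype α] (c : Prop) [Decidable c] (g : α → ℂ) :
    (∑ x : α, if c then g x else 0) = if c then ∑ x, g x else 0 := by
  split_ifs <;> simp

lemma sum_lt_of_symm {N : ℕ} (f : Fin N → Fin N → ℂ) (hs : ∀ p q, f p q = f q p) :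
    (∑ p : Fin N, ∑ q : Fin N, if p < q then f p q else 0)
      = ((∑ p : Fin N, ∑ q : Fin N, f p q) - ∑ p : Fin N, f p p) / 2 := by
  have key : ∀ p q : Fin N, f p q =
      (if p < q then f p q else 0) + (if q < p then f p q else 0)
        + (if p = q then f p q else 0) := by
    intro p q
    rcases lt_trichotomy p q with h | h | h
    · simp [h, asymm h, h.ne]
    · simp [h]
    · simp [h, asymm h, h.ne']
  have h2 : (∑ p : Fin N, ∑ q : Fin N, f p q)
      = (∑ p : Fin N, ∑ q : Fin N, if p < q then f p q else 0)
        + (∑ p : Fin N, ∑ q : Fin N, if q < p then f p q else 0)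
        + (∑ p : Fin N, ∑ q : Fin N, if p = q then f p q else 0) := by
    rw [← Finset.sum_add_distrib, ← Finset.sum_add_distrib]
    refine Finset.sum_congr rfl fun p _ => ?_
    rw [← Finset.sum_add_distrib, ← Finset.sum_add_distrib]
    exact Finset.sum_congr rfl fun q _ => key p q
  have h3 : (∑ p : Fin N, ∑ q : Fin N, if q < p then f p q else 0)
      = (∑ p : Fin N, ∑ q : Fin N, if p < q then f p q else 0) := by
    rw [Finset.sum_comm]
    refine Finset.sum_congr rfl fun p _ => Finset.sum_congr rfl fun q _ => ?_
    rw [hs]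
  have h4 : (∑ p : Fin N, ∑ q : Fin N, if p = q then f p q else 0) = ∑ p : Fin N, f p p := by
    refine Finset.sum_congr rfl fun p _ => ?_
    simp
  rw [h3, h4] at h2
  field_simp
  linear_combination (-1 : ℂ) * h2

lemma combinatorial {N : ℕ} (i j : Fin N) (W : Fin N → Fin N → ℂ) :
    (∑ p : Fin N, ∑ q : Fin N, if p < q then
       (((if i = p then (1:ℂ) else 0) * (if j = p then (1:ℂ) else 0)
          + (if i = q then (1:ℂ) else 0) * (if j = q then (1:ℂ) else 0)) * (W p p + W q q)
        - (if i = p then (1:ℂ) else 0) * (if j = q then (1:ℂ) else 0) * W p q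
        - (if i = q then (1:ℂ) else 0) * (if j = p then (1:ℂ) else 0) * W q p) else 0)
    + (∑ p : Fin N, ∑ q : Fin N, if p ≠ q then
        ((N:ℂ) - 1) * ((if i = p then (1:ℂ) else 0) * (if j = p then (1:ℂ) else 0)) * W q q else 0)
    = (N:ℂ) * ((if i = j then (1:ℂ) else 0) * ∑ p : Fin N, W p p) - W i j := by
  rw [sum_lt_of_symm _ (fun p q => by ring)]
  have hne : ∀ (p q : Fin N) (x : ℂ), (if p ≠ q then x else 0) = x - (if p = q then x else 0) := by
    intro p q x; by_cases h : p = q <;> simp [h]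
  simp only [hne]
  simp only [mul_add, add_mul, mul_sub, sub_mul, mul_ite, ite_mul, zero_mul, mul_zero, one_mul,
    mul_one, Finset.sum_add_distrib, Finset.sum_sub_distrib, sum_ite_const, Finset.sum_ite_eq,
    Finset.sum_ite_eq', Finset.mem_univ, ite_true, Finset.sum_const, Finset.card_univ,
    Fintype.card_fin, nsmul_eq_mul]
  by_cases hij : i = j
  · subst hij; simp [Finset.mul_sum]; ring
  · simp [hij, Ne.symm hij, Finset.mul_sum]; ring

lemma core {n d : ℕ} (z : ℂ) (hz : z^2+z+1 = 0) (hcz : (starRingEnd ℂ) z = z^2)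
    (w : Fin n × Fin d → ℂ) :
    (n:ℂ) • ((1 : Matrix (Fin n) (Fin n) ℂ) ⊗ₖ ptrace (vecMulVec w (star w))) - vecMulVec w (star w)
    = (∑ p : Fin n, ∑ q : Fin n, if p < q then
        (3:ℂ)⁻¹ • ∑ t : Fin 3,
          (vecMulVec (fun x => (Pi.single p 1 : Fin n → ℂ) x + z^(t:ℕ) * (Pi.single q 1 : Fin n → ℂ) x)
            (star (fun x => (Pi.single p 1 : Fin n → ℂ) x + z^(t:ℕ) * (Pi.single q 1 : Fin n → ℂ) x))) ⊗ₖ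
          (vecMulVec (fun a => z^(t:ℕ) * w (p,a) - w (q,a))
            (star (fun a => z^(t:ℕ) * w (p,a) - w (q,a))))
        else 0)
    + (∑ p : Fin n, ∑ q : Fin n, if p ≠ q then
        ((n:ℂ) - 1) • (vecMulVec (Pi.single p 1 : Fin n → ℂ) (star (Pi.single p 1 : Fin n → ℂ))) ⊗ₖ
          (vecMulVec (fun a => w (q,a)) (star (fun a => w (q,a)))) else 0) := by
  ext ⟨i, a⟩ ⟨j, b⟩
  have e1 : ((n:ℂ) • ((1 : Matrix (Fin n) (Fin n) ℂ) ⊗ₖ ptrace (vecMulVec w (star w)))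
      - vecMulVec w (star w)) (i, a) (j, b)
      = (n:ℂ) * ((if i = j then (1:ℂ) else 0) * ∑ p : Fin n, (w (p,a) * (starRingEnd ℂ) (w (p,b))))
        - w (i,a) * (starRingEnd ℂ) (w (j,b)) := by
    simp [ptrace, Matrix.one_apply, vecMulVec_apply, Complex.star_def]
  rw [Matrix.add_apply, e1, ← combinatorial i j (fun p q => w (p,a) * (starRingEnd ℂ) (w (q,b)))]
  congr 1
  · rw [Matrix.sum_apply]
    refine Finset.sum_congr rfl fun p _ => ?_
    rw [Matrix.sum_apply]
    refine Finset.sum_congr rfl fun q _ => ?_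
    rw [ite_apply_mat]
    refine if_congr Iff.rfl ?_ rfl
    rw [Matrix.smul_apply, Matrix.sum_apply]
    have e2 : ∀ t : Fin 3,
        ((vecMulVec (fun x => (Pi.single p 1 : Fin n → ℂ) x + z^(t:ℕ) * (Pi.single q 1 : Fin n → ℂ) x)
            (star (fun x => (Pi.single p 1 : Fin n → ℂ) x + z^(t:ℕ) * (Pi.single q 1 : Fin n → ℂ) x))) ⊗ₖ
          (vecMulVec (fun a' => z^(t:ℕ) * w (p,a') - w (q,a'))
            (star (fun a' => z^(t:ℕ) * w (p,a') - w (q,a'))))) (i,a) (j,b)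
        = (((Pi.single p 1 : Fin n → ℂ) i + z^(t:ℕ) * (Pi.single q 1 : Fin n → ℂ) i) *
            (starRingEnd ℂ) ((Pi.single p 1 : Fin n → ℂ) j + z^(t:ℕ) * (Pi.single q 1 : Fin n → ℂ) j)) *
          ((z^(t:ℕ) * w (p,a) - w (q,a)) * (starRingEnd ℂ) (z^(t:ℕ) * w (p,b) - w (q,b))) := by
      intro t
      simp [vecMulVec_apply, Complex.star_def]
    rw [Finset.sum_congr rfl fun t _ => e2 t, key3 z hz hcz]
    simp only [Pi.single_apply, smul_eq_mul]
    rw [show ((starRingEnd ℂ) (if j = p then (1:ℂ) else 0)) = (if j = p then (1:ℂ) else 0) by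
      split_ifs <;> simp,
      show ((starRingEnd ℂ) (if j = q then (1:ℂ) else 0)) = (if j = q then (1:ℂ) else 0) by
      split_ifs <;> simp]
    ring
  · rw [Matrix.sum_apply]
    refine Finset.sum_congr rfl fun p _ => ?_
    rw [Matrix.sum_apply]
    refine Finset.sum_congr rfl fun q _ => ?_
    rw [ite_apply_mat]
    refine if_congr Iff.rfl ?_ rfl
    simp only [Matrix.smul_apply, kroneckerMap_apply, vecMulVec_apply, Pi.star_apply,
      Complex.star_def, Pi.single_apply, smul_eq_mul]
    rw [show ((starRingEnd ℂ) (if j = p then (1:ℂ) else 0)) = (if j = p then (1:ℂ) else 0) by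
      split_ifs <;> simp]
    ring

lemma lin_sum {n d : ℕ} {ι' : Type*} [Fintype ι']
    (V : ι' → Matrix (Fin n × Fin d) (Fin n × Fin d) ℂ) :
    (n:ℂ) • ((1 : Matrix (Fin n) (Fin n) ℂ) ⊗ₖ ptrace (∑ r, V r)) - (∑ r, V r)
    = ∑ r, ((n:ℂ) • ((1 : Matrix (Fin n) (Fin n) ℂ) ⊗ₖ ptrace (V r)) - V r) := by
  ext ⟨i, a⟩ ⟨j, b⟩
  simp only [Matrix.sub_apply, Matrix.smul_apply, Matrix.sum_apply, kroneckerMap_apply,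
    smul_eq_mul, ptrace]
  rw [Finset.sum_sub_distrib]
  congr 1
  rw [Finset.sum_comm]
  simp only [Finset.mul_sum]

end Stmt5Aux

open Stmt5Aux in
/-- if `n (I_n ⊗ X₂) − (n²−1) X ≥ 0` then `X` is separable. -/
theorem stmt5 (n d : ℕ) (hn : 0 < n) (hd : 0 < d)
    (X : Matrix (Fin n × Fin d) (Fin n × Fin d) ℂ) (hX : X.PosSemidef)
    (h : ((n : ℂ) • ((1 : Matrix (Fin n) (Fin n) ℂ) ⊗ₖ ptrace X)
        - ((n : ℂ) ^ 2 - 1) • X).PosSemidef) :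
    X ∈ SEP n d := by
  rcases eq_or_lt_of_le (show 1 ≤ n from hn) with h1 | h2
  · -- n = 1
    have hn1 : n = 1 := h1.symm
    subst hn1
    refine ⟨1, fun _ => 1, fun _ => Matrix.of (fun a b => X (0, a) (0, b)), fun _ =>
      Matrix.PosSemidef.one, fun _ => ?_, ?_⟩
    · exact hX.submatrix (fun a : Fin d => ((0 : Fin 1), a))
    · ext ⟨i, a⟩ ⟨j, b⟩
      rw [Fin.sum_univ_one]
      fin_cases i <;> fin_cases j <;>
        simp [Matrix.one_apply, Matrix.kroneckerMap_apply]
  · -- n ≥ 2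
    have hn2 : 2 ≤ n := h2
    -- cube root of unity
    set s : ℝ := Real.sqrt 3 with hs
    have hs3 : ((s : ℂ))^2 = 3 := by
      rw [← Complex.ofReal_pow, Real.sq_sqrt (by norm_num : (0:ℝ) ≤ 3)]
      norm_num
    set z : ℂ := (-1 + (s : ℂ) * Complex.I) / 2 with hzdef
    have hz : z^2 + z + 1 = 0 := by
      rw [hzdef]
      linear_combination (((s:ℂ))^2/4) * Complex.I_sq - (1/4 : ℂ) * hs3
    have hcz : (starRingEnd ℂ) z = z^2 := by
      have hconj : (starRingEnd ℂ) z = (-1 - (s : ℂ) * Complex.I) / 2 := by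
        rw [hzdef]
        simp [map_div₀, Complex.conj_ofReal, Complex.conj_I, map_ofNat]
        ring
      rw [hconj, hzdef]
      linear_combination (-((s:ℂ)^2)/4) * Complex.I_sq + (1/4 : ℂ) * hs3
    have hne : ((n:ℂ)^2 - 1) ≠ 0 := by
      have h4 : 4 ≤ n^2 := by nlinarith
      have : ((n:ℂ)^2 - 1) = ((n^2 - 1 : ℕ) : ℂ) := by
        push_cast [Nat.cast_sub (by omega : 1 ≤ n^2)]
        ring
      rw [this]
      exact_mod_cast (by omega : (n^2 - 1 : ℕ) ≠ 0)
    set W : Matrix (Fin n × Fin d) (Fin n × Fin d) ℂ :=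
      (n : ℂ) • ((1 : Matrix (Fin n) (Fin n) ℂ) ⊗ₖ ptrace X) - ((n : ℂ) ^ 2 - 1) • X with hWdef
    have hPW : ptrace W = ptrace X := by
      ext a b
      rw [hWdef]
      simp only [ptrace, Matrix.sub_apply, Matrix.smul_apply, kroneckerMap_apply,
        Matrix.one_apply_eq, smul_eq_mul]
      rw [Finset.sum_sub_distrib, ← Finset.mul_sum, Finset.sum_const, Finset.card_univ,
        Fintype.card_fin, nsmul_eq_mul]
      rw [← Finset.mul_sum]
      ring
    have hXW : X = ((n:ℂ)^2 - 1)⁻¹ • ((n:ℂ) • ((1 : Matrix (Fin n) (Fin n) ℂ) ⊗ₖ ptrace W) - W) := by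
      rw [hPW, hWdef, sub_sub_cancel, smul_smul, inv_mul_cancel₀ hne, one_smul]
    obtain ⟨C, hC⟩ : ∃ C : Matrix (Fin n × Fin d) (Fin n × Fin d) ℂ, W = Cᴴ * C := by
      open scoped MatrixOrder in exact CStarAlgebra.nonneg_iff_eq_star_mul_self.mp h.nonneg
    have hW : W = ∑ r : Fin n × Fin d, vecMulVec (star (C r)) (star (star (C r))) := by
      rw [hC]
      ext p q
      rw [Matrix.sum_apply]
      simp [Matrix.mul_apply, Matrix.conjTranspose_apply, vecMulVec_apply]
    have hcinv : (0:ℂ) ≤ ((n:ℂ)^2 - 1)⁻¹ := by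
      have h1n : (1:ℝ) ≤ (n:ℝ) := by exact_mod_cast hn
      rw [show ((n:ℂ)^2 - 1) = ((((n:ℝ)^2 - 1 : ℝ)) : ℂ) by push_cast; ring, ← Complex.ofReal_inv]
      exact Complex.zero_le_real.mpr (inv_nonneg.mpr (by nlinarith))
    have h3inv : (0:ℂ) ≤ (3:ℂ)⁻¹ := by
      rw [show ((3:ℂ))⁻¹ = (((3:ℝ)⁻¹ : ℝ) : ℂ) by norm_num]
      exact Complex.zero_le_real.mpr (by norm_num)
    have hn1c : (0:ℂ) ≤ (n:ℂ) - 1 := by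
      have h1n : (1:ℝ) ≤ (n:ℝ) := by exact_mod_cast hn
      rw [show (n:ℂ) - 1 = ((((n:ℝ) - 1 : ℝ)) : ℂ) by push_cast; ring]
      exact Complex.zero_le_real.mpr (by linarith)
    rw [hXW, hW, lin_sum]
    simp only [core z hz hcz]
    refine SEP_smul hcinv (SEP_sum _ fun r => SEP_add ?_ ?_)
    · refine SEP_sum _ fun p => SEP_sum _ fun q => ?_
      by_cases hpq : p < q
      · rw [if_pos hpq]
        exact SEP_smul h3inv (SEP_sum _ fun t =>
          SEP_kron (posSemidef_vecMulVec _) (posSemidef_vecMulVec _))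
      · rw [if_neg hpq]
        exact SEP_zero n d
    · refine SEP_sum _ fun p => SEP_sum _ fun q => ?_
      by_cases hpq : p ≠ q
      · rw [if_pos hpq]
        exact SEP_smul hn1c (SEP_kron (posSemidef_vecMulVec _) (posSemidef_vecMulVec _))
      · rw [if_neg hpq]
        exact SEP_zero n d
end
end

section
/- Let X ∈ M_n(ℂ) ⊗ M_d(ℂ) be a nonzero positive semidefinite matrix. If for every unit vector x ∈ ℂⁿ and every unit vector y ∈ ℂ^d one has ⟨x⊗y, X (x⊗y)⟩ < Tr(X²)/Tr(X), then X ∉ SEP_{n,d}. -/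
open MeasureTheory Filter Topology Polynomial Matrix Kronecker
open scoped ComplexOrder

noncomputable section

/-! A separable `X = ∑ᵢ Aᵢ ⊗ Bᵢ` is, after spectrally decomposing every `Aᵢ` and `Bᵢ`, a
nonnegative combination `X = ∑ⱼ wⱼ zⱼ zⱼ*` of product unit vectors `zⱼ = xⱼ ⊗ yⱼ`. Then
`Tr(X²) = ∑ⱼ wⱼ ⟨zⱼ, X zⱼ⟩ < c ∑ⱼ wⱼ = c Tr(X)` for `c = Tr(X²)/Tr(X)`, which is absurd. -/

theorem Complex.re_star_dotProduct_self {n : Type*} [Fintype n] (z : n → ℂ) :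
    (star z ⬝ᵥ z).re = ∑ i, Complex.normSq (z i) := by
  simp only [dotProduct, Complex.re_sum, Pi.star_apply, Complex.star_def, Complex.normSq_apply,
    Complex.mul_re, Complex.conj_re, Complex.conj_im]
  exact Finset.sum_congr rfl fun _ _ => by ring

theorem Complex.sum_prod_normSq_mul {m n : Type*} [Fintype m] [Fintype n] (x : m → ℂ)
    (y : n → ℂ) :
    ∑ p : m × n, Complex.normSq (x p.1 * y p.2) =
      (∑ i, Complex.normSq (x i)) * ∑ j, Complex.normSq (y j) := by
  simp only [map_mul, Fintype.sum_prod_type, Finset.sum_mul_sum]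

namespace Matrix

variable {ι κ l m n p q R : Type*}

theorem trace_vecMulVec_mul [Fintype m] [CommSemiring R] (a b : m → R) (M : Matrix m m R) :
    (vecMulVec a b * M).trace = b ⬝ᵥ M *ᵥ a := by
  simp only [trace, diag_apply, mul_apply, vecMulVec_apply, dotProduct, mulVec, Finset.mul_sum]
  rw [Finset.sum_comm]
  exact Finset.sum_congr rfl fun _ _ => Finset.sum_congr rfl fun _ _ => by ring

theorem kronecker_vecMulVec [CommSemiring R] (a : m → R) (b : n → R) (c : p → R) (e : q → R) :
    vecMulVec a b ⊗ₖ vecMulVec c e =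
      vecMulVec (fun x : m × p => a x.1 * c x.2) (fun y : n × q => b y.1 * e y.2) := by
  ext x y
  simp only [kroneckerMap_apply, vecMulVec_apply]
  ring

theorem sum_kronecker_sum [Fintype ι] [Fintype κ] [Semiring R] (A : ι → Matrix l m R)
    (B : κ → Matrix n p R) : (∑ i, A i) ⊗ₖ (∑ j, B j) = ∑ i, ∑ j, A i ⊗ₖ B j := by
  ext
  simp [sum_apply, Finset.sum_mul_sum]

theorem PosSemidef.exists_eq_sum_smul_vecMulVec [Fintype n] [DecidableEq n] {A : Matrix n n ℂ}
    (hA : A.PosSemidef) :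
    ∃ (α : n → ℝ) (v : n → n → ℂ), (∀ k, 0 ≤ α k) ∧ (∀ k, ∑ i, Complex.normSq (v k i) = 1) ∧
      A = ∑ k, (α k : ℂ) • vecMulVec (v k) (star (v k)) := by
  refine ⟨hA.1.eigenvalues, fun k => hA.1.eigenvectorBasis k, hA.eigenvalues_nonneg,
    fun k => ?_, ?_⟩
  · have := hA.1.eigenvectorBasis.orthonormal.1 k
    rw [EuclideanSpace.norm_eq, Real.sqrt_eq_one] at this
    simpa [Complex.normSq_eq_norm_sq] using this
  · conv_lhs => rw [hA.1.spectral_theorem, Unitary.conjStarAlgAut_apply]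
    ext i j
    rw [mul_apply]
    simp only [mul_diagonal, sum_apply, smul_apply, vecMulVec_apply, star_apply, Pi.star_apply,
      Function.comp_apply, smul_eq_mul, IsHermitian.eigenvectorUnitary_apply,
      RCLike.ofReal_eq_complex_ofReal]
    exact Finset.sum_congr rfl fun _ _ => by ring

variable [Fintype ι] [Fintype n]

theorem re_trace_sum_smul_vecMulVec (w : ι → ℝ) (z : ι → n → ℂ) :
    (∑ j, (w j : ℂ) • vecMulVec (z j) (star (z j))).trace.re =
      ∑ j, w j * ∑ i, Complex.normSq (z j i) := by
  rw [trace_sum, Complex.re_sum]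
  refine Finset.sum_congr rfl fun j _ => ?_
  rw [trace_smul, trace_vecMulVec, dotProduct_comm, smul_eq_mul, Complex.re_ofReal_mul,
    Complex.re_star_dotProduct_self]

theorem re_trace_sum_smul_vecMulVec_mul (w : ι → ℝ) (z : ι → n → ℂ) (M : Matrix n n ℂ) :
    ((∑ j, (w j : ℂ) • vecMulVec (z j) (star (z j))) * M).trace.re =
      ∑ j, w j * (star (z j) ⬝ᵥ M *ᵥ z j).re := by
  rw [Finset.sum_mul, trace_sum, Complex.re_sum]
  refine Finset.sum_congr rfl fun j _ => ?_
  rw [smul_mul_assoc, trace_smul, trace_vecMulVec_mul, smul_eq_mul, Complex.re_ofReal_mul]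

theorem re_trace_mul_lt_of_eq_sum_smul_vecMulVec {X M : Matrix n n ℂ} {w : ι → ℝ}
    {z : ι → n → ℂ} {c : ℝ} (hw : ∀ j, 0 ≤ w j) (hz : ∀ j, ∑ i, Complex.normSq (z j i) = 1)
    (hM : ∀ j, (star (z j) ⬝ᵥ M *ᵥ z j).re < c)
    (hX : X = ∑ j, (w j : ℂ) • vecMulVec (z j) (star (z j))) (hX0 : X ≠ 0) :
    (X * M).trace.re < c * X.trace.re := by
  obtain ⟨j₀, hj₀⟩ : ∃ j, w j ≠ 0 := by
    by_contra! hw0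
    exact hX0 (by simp [hX, hw0])
  simp only [hX, re_trace_sum_smul_vecMulVec_mul, re_trace_sum_smul_vecMulVec, hz, mul_one]
  rw [Finset.mul_sum]
  refine Finset.sum_lt_sum (fun j _ => ?_) ⟨j₀, Finset.mem_univ _, ?_⟩
  · exact (mul_le_mul_of_nonneg_left (hM j).le (hw j)).trans_eq (mul_comm _ _)
  · exact (mul_lt_mul_of_pos_left (hM j₀) ((hw j₀).lt_of_ne' hj₀)).trans_eq (mul_comm _ _)

end Matrix

open Matrix

theorem exists_eq_sum_smul_vecMulVec_of_mem_SEP {n d : ℕ}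
    {X : Matrix (Fin n × Fin d) (Fin n × Fin d) ℂ} (hX : X ∈ SEP n d) :
    ∃ (ι : Type) (_ : Fintype ι) (w : ι → ℝ) (x : ι → Fin n → ℂ) (y : ι → Fin d → ℂ),
      (∀ j, 0 ≤ w j) ∧ (∀ j, ∑ i, Complex.normSq (x j i) = 1) ∧
      (∀ j, ∑ i, Complex.normSq (y j i) = 1) ∧
      X = ∑ j, (w j : ℂ) • vecMulVec (fun p : Fin n × Fin d => x j p.1 * y j p.2)
        (star fun p : Fin n × Fin d => x j p.1 * y j p.2) := by
  obtain ⟨k, A, B, hA, hB, rfl⟩ := hX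
  choose α v hα hv hAeq using fun i => (hA i).exists_eq_sum_smul_vecMulVec
  choose β u hβ hu hBeq using fun i => (hB i).exists_eq_sum_smul_vecMulVec
  refine ⟨Fin k × Fin n × Fin d, inferInstance, fun j => α j.1 j.2.1 * β j.1 j.2.2,
    fun j => v j.1 j.2.1, fun j => u j.1 j.2.2, fun j => mul_nonneg (hα _ _) (hβ _ _),
    fun j => hv _ _, fun j => hu _ _, ?_⟩
  simp only [Fintype.sum_prod_type]
  refine Finset.sum_congr rfl fun i _ => ?_
  rw [hAeq i, hBeq i, sum_kronecker_sum]
  refine Finset.sum_congr rfl fun k _ => Finset.sum_congr rfl fun l _ => ?_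
  rw [smul_kronecker, kronecker_smul, kronecker_vecMulVec, smul_smul, Complex.ofReal_mul]
  congr 2
  ext p
  simp

theorem stmt6_general (n d : ℕ)
    (X : Matrix (Fin n × Fin d) (Fin n × Fin d) ℂ) (hX : X.PosSemidef) (hX0 : X ≠ 0)
    (h : ∀ (x : Fin n → ℂ) (y : Fin d → ℂ),
      (∑ i, Complex.normSq (x i)) = 1 → (∑ j, Complex.normSq (y j)) = 1 →
      (star (fun p : Fin n × Fin d => x p.1 * y p.2) ⬝ᵥ
          X *ᵥ (fun p : Fin n × Fin d => x p.1 * y p.2)).re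
        < (X * X).trace.re / X.trace.re) :
    X ∉ SEP n d := by
  intro hsep
  obtain ⟨ι, _, w, x, y, hw, hx, hy, hXeq⟩ := exists_eq_sum_smul_vecMulVec_of_mem_SEP hsep
  have htr : 0 < X.trace.re :=
    (Complex.pos_iff.mp (hX.trace_nonneg.lt_of_ne' (hX.trace_eq_zero_iff.not.mpr hX0))).1
  have hlt := re_trace_mul_lt_of_eq_sum_smul_vecMulVec hw
    (fun j => by rw [Complex.sum_prod_normSq_mul, hx j, hy j, one_mul])
    (fun j => h (x j) (y j) (hx j) (hy j)) hXeq hX0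
  rw [div_mul_cancel₀ _ htr.ne'] at hlt
  exact lt_irrefl _ hlt

/-- a nonzero PSD matrix whose diagonal values on product unit vectors
are all strictly below `Tr(X²)/Tr(X)` is entangled. -/
theorem stmt6 (n d : ℕ) (hn : 0 < n) (hd : 0 < d)
    (X : Matrix (Fin n × Fin d) (Fin n × Fin d) ℂ) (hX : X.PosSemidef) (hX0 : X ≠ 0)
    (h : ∀ (x : Fin n → ℂ) (y : Fin d → ℂ),
      (∑ i, Complex.normSq (x i)) = 1 → (∑ j, Complex.normSq (y j)) = 1 →
      (star (fun p : Fin n × Fin d => x p.1 * y p.2) ⬝ᵥ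
          X *ᵥ (fun p : Fin n × Fin d => x p.1 * y p.2)).re
        < (X * X).trace.re / X.trace.re) :
    X ∉ SEP n d :=
  stmt6_general n d X hX hX0 h
end
end

section
/- For every real number n ≥ 2, one has (1 + √(n²+n−1)) / (√(n²+n−1) − √(n²−1)) ≤ (1 + √(n²−2)) / (√(n²−1) − √(n²−2)); note both denominators are positive for n ≥ 2. -/
set_option maxHeartbeats 1000000 in
lemma stmt16_mid (n : ℝ) (hn : 2 ≤ n) :
    (1 + (n + 1/2 - 1/(4*n))) * ((n - 1/(2*n)) + (n + 1/2 - 1/(4*n)))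
      ≤ n * (1 + (n - 1/n - 1/n^3)) * ((n - 1/n - 1/n^3) + (n - 1/(2*n) - 1/n^3)) := by
  have h0 : (0:ℝ) < n := by linarith
  have h2 : (0:ℝ) ≤ n - 2 := by linarith
  have hne : n ≠ 0 := ne_of_gt h0
  rw [← sub_nonneg]
  have hid : n * (1 + (n - 1/n - 1/n^3)) * ((n - 1/n - 1/n^3) + (n - 1/(2*n) - 1/n^3))
      - (1 + (n + 1/2 - 1/(4*n))) * ((n - 1/(2*n)) + (n + 1/2 - 1/(4*n)))
      = (2*n^9 - 7*n^7 - n^6 - (5/4)*n^5 - (35/16)*n^4 + (7/2)*n^3 + 2*n) / n^6 := by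
    field_simp
    ring
  rw [hid]
  apply div_nonneg _ (by positivity)
  nlinarith [pow_nonneg h2 2, pow_nonneg h2 3, pow_nonneg h2 4, pow_nonneg h2 5,
    pow_nonneg h2 6, pow_nonneg h2 7, pow_nonneg h2 8, pow_nonneg h2 9, h2]

set_option maxHeartbeats 1000000 in
/-- for every real `n ≥ 2`, both denominators below are positive and
`(1 + √(n²+n−1))/(√(n²+n−1) − √(n²−1)) ≤ (1 + √(n²−2))/(√(n²−1) − √(n²−2))`. -/
theorem stmt16 (n : ℝ) (hn : 2 ≤ n) :
    0 < Real.sqrt (n ^ 2 + n - 1) - Real.sqrt (n ^ 2 - 1) ∧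
    0 < Real.sqrt (n ^ 2 - 1) - Real.sqrt (n ^ 2 - 2) ∧
    (1 + Real.sqrt (n ^ 2 + n - 1)) / (Real.sqrt (n ^ 2 + n - 1) - Real.sqrt (n ^ 2 - 1))
      ≤ (1 + Real.sqrt (n ^ 2 - 2)) / (Real.sqrt (n ^ 2 - 1) - Real.sqrt (n ^ 2 - 2)) := by
  set a := Real.sqrt (n ^ 2 - 2) with ha'
  set b := Real.sqrt (n ^ 2 - 1) with hb'
  set c := Real.sqrt (n ^ 2 + n - 1) with hc'
  have hn0 : (0:ℝ) < n := by linarith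
  have hne : n ≠ 0 := ne_of_gt hn0
  have h2 : (0:ℝ) ≤ n ^ 2 - 2 := by nlinarith
  have ha2 : a ^ 2 = n ^ 2 - 2 := Real.sq_sqrt h2
  have hb2 : b ^ 2 = n ^ 2 - 1 := Real.sq_sqrt (by nlinarith)
  have hc2 : c ^ 2 = n ^ 2 + n - 1 := Real.sq_sqrt (by nlinarith)
  have ha0 : 0 ≤ a := Real.sqrt_nonneg _
  have hb0 : 0 ≤ b := Real.sqrt_nonneg _
  have hc0 : 0 ≤ c := Real.sqrt_nonneg _
  have hab : a < b := Real.sqrt_lt_sqrt h2 (by nlinarith)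
  have hbc : b < c := Real.sqrt_lt_sqrt (by nlinarith) (by nlinarith)
  have hd1 : 0 < c - b := by linarith
  have hd2 : 0 < b - a := by linarith
  refine ⟨hd1, hd2, ?_⟩
  have hinv1 : 1/n ≤ 1/2 := by rw [div_le_div_iff₀ hn0 (by norm_num)]; linarith
  have hinv3 : 1/n^3 ≤ 1/8 := by
    rw [div_le_div_iff₀ (by positivity) (by norm_num)]; nlinarith
  have hinv2 : 1/(2*n) ≤ 1/4 := by
    rw [div_le_div_iff₀ (by positivity) (by norm_num)]; linarith
  have hinv4 : 1/(4*n) ≤ 1/8 := by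
    rw [div_le_div_iff₀ (by positivity) (by norm_num)]; linarith
  -- lower bounds for a, b; upper bounds for b, c
  have hal : n - 1/n - 1/n^3 ≤ a := by
    have ht0 : (0:ℝ) ≤ n - 1/n - 1/n^3 := by linarith
    have hsq : (n - 1/n - 1/n^3)^2 ≤ n ^ 2 - 2 := by
      rw [← sub_nonneg]
      have hid : n ^ 2 - 2 - (n - 1/n - 1/n^3)^2
          = (n^4 - 2*n^2 - 1) / n^6 := by field_simp; ring
      rw [hid]
      apply div_nonneg _ (by positivity)
      nlinarith [sq_nonneg n, sq_nonneg (n^2 - 2)]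
    nlinarith [hsq, ha2, ha0, ht0]
  have hbl : n - 1/(2*n) - 1/n^3 ≤ b := by
    have ht0 : (0:ℝ) ≤ n - 1/(2*n) - 1/n^3 := by linarith
    have hsq : (n - 1/(2*n) - 1/n^3)^2 ≤ n ^ 2 - 1 := by
      rw [← sub_nonneg]
      have hid : n ^ 2 - 1 - (n - 1/(2*n) - 1/n^3)^2
          = ((7/4)*n^4 - n^2 - 1) / n^6 := by field_simp; ring
      rw [hid]
      apply div_nonneg _ (by positivity)
      nlinarith [sq_nonneg n, sq_nonneg (n^2 - 2)]
    nlinarith [hsq, hb2, hb0, ht0]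
  have hbu : b ≤ n - 1/(2*n) := by
    have ht0 : (0:ℝ) ≤ n - 1/(2*n) := by linarith
    have hsq : n ^ 2 - 1 ≤ (n - 1/(2*n))^2 := by
      rw [← sub_nonneg]
      have hid : (n - 1/(2*n))^2 - (n ^ 2 - 1) = (1/4) / n^2 := by field_simp; ring
      rw [hid]
      positivity
    nlinarith [hsq, hb2, hb0, ht0]
  have hcu : c ≤ n + 1/2 - 1/(4*n) := by
    have ht0 : (0:ℝ) ≤ n + 1/2 - 1/(4*n) := by linarith
    have hsq : n ^ 2 + n - 1 ≤ (n + 1/2 - 1/(4*n))^2 := by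
      rw [← sub_nonneg]
      have hid : (n + 1/2 - 1/(4*n))^2 - (n ^ 2 + n - 1)
          = ((3/4)*n^2 - (1/4)*n + 1/16) / n^2 := by field_simp; ring
      rw [hid]
      apply div_nonneg _ (by positivity)
      nlinarith [sq_nonneg n]
    nlinarith [hsq, hc2, hc0, ht0]
  -- key inequality
  have key : (1 + c) * (b + c) ≤ n * (1 + a) * (a + b) := by
    calc (1 + c) * (b + c)
        ≤ (1 + (n + 1/2 - 1/(4*n))) * ((n - 1/(2*n)) + (n + 1/2 - 1/(4*n))) := by
          exact mul_le_mul (by linarith) (by linarith) (by linarith) (by linarith)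
      _ ≤ n * (1 + (n - 1/n - 1/n^3)) * ((n - 1/n - 1/n^3) + (n - 1/(2*n) - 1/n^3)) :=
          stmt16_mid n hn
      _ ≤ n * (1 + a) * (a + b) := by
          have ht0 : (0:ℝ) ≤ n - 1/n - 1/n^3 := by linarith
          have ht1 : (0:ℝ) ≤ n - 1/(2*n) - 1/n^3 := by linarith
          have h1 : n * (1 + (n - 1/n - 1/n^3)) ≤ n * (1 + a) :=
            mul_le_mul_of_nonneg_left (by linarith) hn0.le
          exact mul_le_mul h1 (by linarith) (by linarith) (by positivity)
  -- conclude
  rw [div_le_div_iff₀ hd1 hd2]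
  have hba : (b - a) * (a + b) = 1 := by linear_combination hb2 - ha2
  have hcb : (c - b) * (b + c) = n := by linear_combination hc2 - hb2
  have hpos : 0 < (a + b) * (b + c) := by
    have h1 : 0 < a + b := by nlinarith
    have h2' : 0 < b + c := by nlinarith
    positivity
  rw [← mul_le_mul_iff_of_pos_right hpos]
  calc (1 + c) * (b - a) * ((a + b) * (b + c))
      = (1 + c) * (b + c) * ((b - a) * (a + b)) := by ring
    _ = (1 + c) * (b + c) := by rw [hba, mul_one]
    _ ≤ n * (1 + a) * (a + b) := key
    _ = (1 + a) * (a + b) * ((c - b) * (b + c)) := by rw [hcb]; ring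
    _ = (1 + a) * (c - b) * ((a + b) * (b + c)) := by ring
end
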